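/- Let Q(t) = (1+t)(1+t²)···(1+t^{2n−1}) and let P(t) = (1+t)(1+t²)···(1+t^{s−1})·(1+t+···+t^{s−1}+2t^{s})·(1+t^{s+1})···(1+t^{2n−1}), where s is the largest power of 2 dividing 2n. Then for every i with 0 ≤ i ≤ s−1, the coefficient of tⁱ in P equals the sum of the coefficients of t⁰, t¹, …, tⁱ in Q. -/

import Mathlib

open Polynomial Finset

/-! Below degree `s` the factor `1 + tˢ` of `Q` acts as `1` and the factor
`1 + t + ⋯ + t^{s-1} + 2tˢ` of `P` acts as `1/(1 - t)`, so modulo `tˢ` the polynomial `P` is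
`Q/(1 - t)`, whose coefficients are the partial sums of those of `Q`. This needs only
`s ≤ 2n`, so that the factor `1 + tˢ` is either present in `Q` or (when `s = 2n`) lies just
beyond its last factor. -/

section Coefficients

variable {R : Type*}

theorem coeff_add_mul_X_pow_of_lt [Semiring R] (p q : R[X]) {s i : ℕ} (hi : i < s) :
    (p + q * X ^ s).coeff i = p.coeff i := by
  rw [coeff_add, coeff_mul_X_pow', if_neg (by omega), add_zero]

theorem coeff_mul_geom_sum_of_lt [Semiring R] (p : R[X]) {s i : ℕ} (hi : i < s) :
    (p * ∑ j ∈ range s, X ^ j).coeff i = ∑ j ∈ range (i + 1), p.coeff j := by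
  have hterm : ∀ j ∈ range s, (p * X ^ j).coeff i =
      if j ∈ range (i + 1) then p.coeff (i - j) else 0 := by
    intro j _
    simp only [coeff_mul_X_pow', mem_range, Nat.lt_succ_iff]
  rw [mul_sum, finsetSum_coeff, sum_congr rfl hterm, sum_ite_mem,
    inter_eq_right.mpr (range_subset_range.mpr (by omega)), ← sum_range_reflect]
  refine sum_congr rfl fun j hj => congrArg p.coeff ?_
  rw [mem_range] at hj
  omega

theorem prod_Icc_eq_prod_Icc_mul_mul_prod_Icc {M : Type*} [CommMonoid M] (f : ℕ → M)
    {a s m : ℕ} (hs : 0 < s) (has : a ≤ s) (hsm : s ≤ m) :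
    ∏ j ∈ Icc a m, f j = (∏ j ∈ Icc a (s - 1), f j) * f s * ∏ j ∈ Icc (s + 1) m, f j := by
  have hall : Icc a m = Ico a (m + 1) := by ext; simp only [mem_Icc, mem_Ico]; omega
  have hlow : Icc a (s - 1) = Ico a s := by ext; simp only [mem_Icc, mem_Ico]; omega
  have hhigh : Icc (s + 1) m = Ico (s + 1) (m + 1) := by ext; simp only [mem_Icc, mem_Ico]; omega
  rw [hall, hlow, hhigh, ← prod_Ico_succ_top has, prod_Ico_consecutive _ (by omega) (by omega)]

theorem coeff_prod_one_add_X_pow_eq_coeff_prod_erase [CommSemiring R] {s m i : ℕ}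
    (hs : 0 < s) (hsm : s ≤ m + 1) (hi : i < s) :
    (∏ j ∈ Icc 1 m, (1 + X ^ j : R[X])).coeff i =
      ((∏ j ∈ Icc 1 (s - 1), (1 + X ^ j : R[X])) * ∏ j ∈ Icc (s + 1) m, (1 + X ^ j)).coeff i := by
  rcases hsm.lt_or_eq with hsm | rfl
  · rw [prod_Icc_eq_prod_Icc_mul_mul_prod_Icc (a := 1) _ hs hs (by omega), mul_right_comm,
      mul_one_add, coeff_add_mul_X_pow_of_lt _ _ hi]
  · rw [Nat.add_sub_cancel, Icc_eq_empty_of_lt (by omega : m < m + 1 + 1), prod_empty, mul_one]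

end Coefficients

theorem coeff_PSO_eq_partial_sum_coeff_SO_general (n : ℕ)
    (s : ℕ) (hs : s = 2 ^ ((2 * n).factorization 2))
    (Q P : Polynomial ℤ)
    (hQ : Q = ∏ j ∈ Icc 1 (2 * n - 1), (1 + X ^ j))
    (hP : P = (∏ j ∈ Icc 1 (s - 1), (1 + X ^ j)) *
        ((∑ j ∈ range s, X ^ j) + 2 * X ^ s) *
        ∏ j ∈ Icc (s + 1) (2 * n - 1), (1 + X ^ j)) :
    ∀ i ≤ s - 1, P.coeff i = ∑ j ∈ range (i + 1), Q.coeff j := by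
  intro i hi
  have hs_pos : 0 < s := hs ▸ Nat.two_pow_pos _
  have hs_le : s ≤ 2 * n - 1 + 1 := by
    rcases Nat.eq_zero_or_pos n with rfl | hn
    · simp [hs]
    · have := Nat.ordProj_le 2 (by omega : 2 * n ≠ 0)
      omega
  rw [hP, mul_right_comm, mul_add, ← mul_assoc, coeff_add_mul_X_pow_of_lt _ _ (by omega),
    coeff_mul_geom_sum_of_lt _ (by omega), hQ]
  refine sum_congr rfl fun j hj => ?_
  rw [mem_range] at hj
  exact (coeff_prod_one_add_X_pow_eq_coeff_prod_erase hs_pos hs_le (by omega)).symm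

/-- Coefficient identity between the mod-2 Poincaré polynomials of `SO(2n)`
and `PSO(2n)`: with `s` the largest power of 2 dividing `2n`,
`Q(t) = ∏_{j=1}^{2n-1} (1+t^j)` and
`P(t) = ∏_{j=1}^{s-1} (1+t^j) · (1+t+⋯+t^{s-1}+2t^s) · ∏_{j=s+1}^{2n-1} (1+t^j)`,
for `0 ≤ i ≤ s-1` the coefficient of `tⁱ` in `P` is the sum of the
coefficients of `t⁰,…,tⁱ` in `Q`. -/
theorem coeff_PSO_eq_partial_sum_coeff_SO (n : ℕ) (hn : 1 ≤ n)
    (s : ℕ) (hs : s = 2 ^ ((2 * n).factorization 2))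
    (Q P : Polynomial ℤ)
    (hQ : Q = ∏ j ∈ Icc 1 (2 * n - 1), (1 + X ^ j))
    (hP : P = (∏ j ∈ Icc 1 (s - 1), (1 + X ^ j)) *
        ((∑ j ∈ range s, X ^ j) + 2 * X ^ s) *
        ∏ j ∈ Icc (s + 1) (2 * n - 1), (1 + X ^ j)) :
    ∀ i ≤ s - 1, P.coeff i = ∑ j ∈ range (i + 1), Q.coeff j :=
  coeff_PSO_eq_partial_sum_coeff_SO_general n s hs Q P hQ hP
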